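/- arXiv:1605.02192 — 2 statements merged into one kernel-verified Lean document; each statement's English description precedes it below -/
import Mathlib

section
/- Let M ⊂ ℝ^m be a smooth submanifold, P_u the orthogonal projection of ℝ^m onto T_uM, and σ_i(u) = P_u(e_i). Viewing each σ_i as a vector field on M and as a first-order differential operator, one has ∑_{i=1}^m σ_i² f = Δ f for every smooth function f on M, where Δ is the Laplace–Beltrami operator of the induced metric. Equivalently, ∑_{i=1}^m ∇_{σ_i} σ_i = 0, where ∇ is the Levi-Civita connection of the induced metric. -/
open scoped BigOperators RealInnerProductSpace

/-- Let `M ⊂ ℝ^m` be a smooth embedded submanifold, with tangent spaces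
`T u` (characterised as the spaces of velocities of curves in `M`), and let
`P u : ℝ^m →L ℝ^m` be the orthogonal projection onto `T u`, depending smoothly on `u`
along `M`.  Set `σ i (w) = P w (e_i)`.  Then, with the Levi–Civita covariant derivative of
the induced metric given by `∇_X Y (u) = P u (D_{X(u)} Y)`, one has
`∑ i ∇_{σ i} σ i = 0` at every point `u ∈ M`. -/
theorem stmt3 {m : ℕ}
    (M : Set (EuclideanSpace ℝ (Fin m)))
    (T : EuclideanSpace ℝ (Fin m) → Submodule ℝ (EuclideanSpace ℝ (Fin m)))
    (P : EuclideanSpace ℝ (Fin m) →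
      EuclideanSpace ℝ (Fin m) →L[ℝ] EuclideanSpace ℝ (Fin m))
    -- `P u` is the orthogonal projection of `ℝ^m` onto `T u`
    (hP : ∀ u v, P u v = ((T u).subtype ((T u).orthogonalProjectionOnto v)))
    -- the field of projections (equivalently, of tangent spaces) is smooth along `M`
    (hsmooth : ContDiffOn ℝ (⊤ : ℕ∞) P M)
    (huniq : ∀ u ∈ M, UniqueDiffWithinAt ℝ M u)
    -- `T u` is the tangent space of `M` at `u`: the set of velocities of curves in `M`
    (htan : ∀ u ∈ M, ∀ v, v ∈ T u ↔
      ∃ γ : ℝ → EuclideanSpace ℝ (Fin m),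
        (∀ t, γ t ∈ M) ∧ γ 0 = u ∧ HasDerivAt γ v 0)
    (u : EuclideanSpace ℝ (Fin m)) (hu : u ∈ M) :
    ∑ i : Fin m,
      P u (fderivWithin ℝ (fun w => P w (EuclideanSpace.single i 1)) M u
            (P u (EuclideanSpace.single i 1)))
      = 0 := by
  classical
  -- basic properties of the projections
  have hPP : ∀ (w x : EuclideanSpace ℝ (Fin m)), P w (P w x) = P w x := by
    intro w x
    simp only [hP, Submodule.coe_subtype, Submodule.orthogonalProjectionOnto_mem_subspace_eq_self]
  have hPsym : ∀ (w x y : EuclideanSpace ℝ (Fin m)), ⟪P w x, y⟫ = ⟪x, P w y⟫ := by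
    intro w x y
    simp only [hP, Submodule.coe_subtype]
    exact Submodule.inner_starProjection_left_eq_right _ x y
  -- differentiability data
  have hPdiff : DifferentiableWithinAt ℝ P M u :=
    (hsmooth.differentiableOn (by simp)) u hu
  set A := fderivWithin ℝ P M u with hA
  have hAderiv : HasFDerivWithinAt P A M u := hPdiff.hasFDerivWithinAt
  have hud : UniqueDiffWithinAt ℝ M u := huniq u hu
  -- derivative of `w ↦ P w y`
  have hgd : ∀ y : EuclideanSpace ℝ (Fin m), HasFDerivWithinAt (fun w => P w y) (A.flip y) M u := by
    intro y
    have := hAderiv.clm_apply (hasFDerivWithinAt_const y u M)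
    simpa using this
  -- Identity I: differentiating `P (P y) = P y`
  have hI : ∀ v y : EuclideanSpace ℝ (Fin m), (A v) (P u y) + P u ((A v) y) = (A v) y := by
    intro v y
    have hfd : HasFDerivWithinAt (fun w => P w (P w y))
        ((P u).comp (A.flip y) + A.flip (P u y)) M u :=
      hAderiv.clm_apply (hgd y)
    have heq : (fun w : EuclideanSpace ℝ (Fin m) => P w (P w y)) = fun w => P w y := funext fun w => hPP w y
    rw [heq] at hfd
    have h2 := hud.eq hfd (hgd y)
    have h3 : ((P u).comp (A.flip y) + A.flip (P u y)) v = (A.flip y) v :=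
      congrFun (congrArg (fun (L : EuclideanSpace ℝ (Fin m) →L[ℝ] EuclideanSpace ℝ (Fin m)) => (L : EuclideanSpace ℝ (Fin m) → EuclideanSpace ℝ (Fin m))) h2) v
    simpa [ContinuousLinearMap.add_apply, ContinuousLinearMap.comp_apply,
      ContinuousLinearMap.flip_apply, add_comm] using h3
  -- consequence: `P ∘ (A v) ∘ P = 0`
  have hPAP : ∀ v y : EuclideanSpace ℝ (Fin m), P u ((A v) (P u y)) = 0 := by
    intro v y
    have h := hI v (P u y)
    rw [hPP u y] at h
    exact add_eq_left.mp h
  -- Identity II: each `A v` is symmetric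
  have hII : ∀ v x y : EuclideanSpace ℝ (Fin m), ⟪(A v) x, y⟫ = ⟪x, (A v) y⟫ := by
    intro v x y
    set Φ : (EuclideanSpace ℝ (Fin m) →L[ℝ] EuclideanSpace ℝ (Fin m)) →L[ℝ] ℝ :=
      (innerSL ℝ y).comp (ContinuousLinearMap.apply ℝ (EuclideanSpace ℝ (Fin m)) x) with hΦ
    set Ψ : (EuclideanSpace ℝ (Fin m) →L[ℝ] EuclideanSpace ℝ (Fin m)) →L[ℝ] ℝ :=
      (innerSL ℝ x).comp (ContinuousLinearMap.apply ℝ (EuclideanSpace ℝ (Fin m)) y) with hΨ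
    have hΦd : HasFDerivWithinAt (fun w => Φ (P w)) (Φ.comp A) M u :=
      (Φ.hasFDerivAt).comp_hasFDerivWithinAt u hAderiv
    have hΨd : HasFDerivWithinAt (fun w => Ψ (P w)) (Ψ.comp A) M u :=
      (Ψ.hasFDerivAt).comp_hasFDerivWithinAt u hAderiv
    have heq : (fun w => Φ (P w)) = fun w => Ψ (P w) := by
      funext w
      simp only [hΦ, hΨ, ContinuousLinearMap.comp_apply, ContinuousLinearMap.apply_apply,
        innerSL_apply_apply]
      exact (real_inner_comm (P w x) y).trans (hPsym w x y)
    rw [heq] at hΦd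
    have h2 := hud.eq hΦd hΨd
    have h3 : (Φ.comp A) v = (Ψ.comp A) v := by rw [h2]
    simp only [hΦ, hΨ, ContinuousLinearMap.comp_apply, ContinuousLinearMap.apply_apply,
      innerSL_apply_apply] at h3
    exact (real_inner_comm y ((A v) x)).trans h3
  -- the standard basis vectors
  set e : Fin m → EuclideanSpace ℝ (Fin m) := fun i => EuclideanSpace.single i 1 with he
  have hsingle : ∀ (i : Fin m) (z : EuclideanSpace ℝ (Fin m)), ⟪e i, z⟫ = z i := by
    intro i z
    simp [he, EuclideanSpace.inner_single_left]
  have hinner : ∀ a b : EuclideanSpace ℝ (Fin m), ⟪a, b⟫ = ∑ i, a i * b i := by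
    intro a b
    simp [PiLp.inner_apply, RCLike.inner_apply, conj_trivial, mul_comm]
  -- decomposition of `A v` along the basis
  have hdec : ∀ v : EuclideanSpace ℝ (Fin m), A v = ∑ j, v j • A (e j) := by
    intro v
    have hv : v = ∑ j, v j • e j := by
      ext k
      rw [WithLp.ofLp_sum, Finset.sum_apply]
      simp [he, EuclideanSpace.single_apply, Finset.sum_ite_eq, eq_comm]
    conv_lhs => rw [hv]
    rw [map_sum]
    exact Finset.sum_congr rfl fun j _ => (A.map_smul _ _)
  have hsymP : ∀ i j : Fin m, (P u (e i)) j = (P u (e j)) i := by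
    intro i j
    exact (hsingle j (P u (e i))).symm.trans
      ((real_inner_comm (P u (e i)) (e j)).trans
        ((hPsym u (e i) (e j)).trans (hsingle i (P u (e j)))))
  -- rewrite the goal
  have hfd : ∀ i : Fin m, fderivWithin ℝ (fun w => P w (e i)) M u = A.flip (e i) :=
    fun i => (hgd (e i)).fderivWithin hud
  have hgoal : ∑ i : Fin m,
      P u (fderivWithin ℝ (fun w => P w (EuclideanSpace.single i 1)) M u
            (P u (EuclideanSpace.single i 1)))
      = ∑ i : Fin m, P u ((A (P u (e i))) (e i)) := by
    refine Finset.sum_congr rfl fun i _ => ?_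
    rw [show (EuclideanSpace.single i (1:ℝ)) = e i from rfl, hfd i]
    rfl
  rw [hgoal]
  set S : EuclideanSpace ℝ (Fin m) := ∑ i, P u ((A (P u (e i))) (e i)) with hS
  have key : ∀ x, ⟪S, x⟫ = 0 := by
    intro x
    rw [hS, sum_inner]
    have h1 : ∀ i : Fin m, ⟪P u ((A (P u (e i))) (e i)), x⟫
        = ∑ j, (P u (e j)) i * ((A (e j)) (P u x)) i := by
      intro i
      rw [hPsym, hII, hdec (P u (e i))]
      simp only [ContinuousLinearMap.sum_apply, ContinuousLinearMap.smul_apply]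
      rw [inner_sum]
      refine Finset.sum_congr rfl fun j _ => ?_
      rw [real_inner_smul_right, hsingle, hsymP i j]
    calc ∑ i, ⟪P u ((A (P u (e i))) (e i)), x⟫
        = ∑ i, ∑ j, (P u (e j)) i * ((A (e j)) (P u x)) i :=
          Finset.sum_congr rfl fun i _ => h1 i
      _ = ∑ j, ∑ i, (P u (e j)) i * ((A (e j)) (P u x)) i := Finset.sum_comm
      _ = ∑ j : Fin m, ⟪P u (e j), (A (e j)) (P u x)⟫ :=
          Finset.sum_congr rfl fun j _ => (hinner _ _).symm
      _ = ∑ j : Fin m, ⟪e j, P u ((A (e j)) (P u x))⟫ :=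
          Finset.sum_congr rfl fun j _ => hPsym u (e j) _
      _ = 0 := by
          refine Finset.sum_eq_zero fun j _ => ?_
          rw [hPAP (e j) x, inner_zero_right]
  have : ⟪S, S⟫ = 0 := key S
  exact inner_self_eq_zero.mp this
end

section
/- For the extraction-contraction coproduct Δ⁻ on decorated forests defined by Δ⁻(T,𝔫,𝔢) = ∑_{A⊂T} ∑_{𝔢_A,𝔫_A} (1/𝔢_A!) binom(𝔫,𝔫_A) (A, 𝔫_A+π𝔢_A, 𝔢↾E_A) ⊗ (R_A T, R_A(𝔫-𝔫_A), 𝔢+𝔢_A), where the outer sum ranges over subforests A of T and R_A contracts the connected components of A: the sum is finite after projecting the left factor to T_- (the quotient by the ideal generated by trees of nonnegative degree), because for each fixed subforest A only finitely many choices of (𝔫_A, 𝔢_A) yield a left factor of negative degree. -/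
open scoped BigOperators Classical

/-- Parabolic size `|k| = 2k₀ + k₁` of a decoration `k ∈ ℕ²`. -/
def decDeg (k : ℕ × ℕ) : ℝ := 2 * k.1 + k.2

/-!
Since `|k| ≥ 0` for every decoration, a negative total degree `edgeDeg + ∑_v |𝔫_A(v) + π𝔢_A(v)|`
forces every summand, hence every `𝔢_A(e) ≤ π𝔢_A(att e)`, below `N > -edgeDeg`. Together with
`𝔫_A ≤ 𝔫`, the admissible pairs lie in a finite box of `ℕ²`-valued functions.
-/

lemma decDeg_nonneg (k : ℕ × ℕ) : 0 ≤ decDeg k := by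
  unfold decDeg
  positivity

lemma decDeg_mono {k l : ℕ × ℕ} (h : k ≤ l) : decDeg k ≤ decDeg l := by
  have h₁ : (k.1 : ℝ) ≤ l.1 := by exact_mod_cast h.1
  have h₂ : (k.2 : ℝ) ≤ l.2 := by exact_mod_cast h.2
  unfold decDeg
  linarith

lemma le_of_decDeg_lt {k : ℕ × ℕ} {N : ℕ} (h : decDeg k < N) : k ≤ (N, N) := by
  have h₁ : (k.1 : ℝ) < N := by unfold decDeg at h; linarith [(k.2.cast_nonneg : (0 : ℝ) ≤ k.2)]
  have h₂ : (k.2 : ℝ) < N := by unfold decDeg at h; linarith [(k.1.cast_nonneg : (0 : ℝ) ≤ k.1)]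
  exact ⟨by exact_mod_cast h₁.le, by exact_mod_cast h₂.le⟩

section Pushforward

variable {VA DA : Type} [Fintype DA] (att : DA → VA)

lemma le_sum_ite_att (g : DA → ℕ × ℕ) (e : DA) :
    g e ≤ ∑ e' : DA, if att e' = att e then g e' else 0 := by
  simpa using Finset.single_le_sum (f := fun e' => if att e' = att e then g e' else 0)
    (fun _ _ => zero_le) (Finset.mem_univ e)

lemma le_of_sum_decDeg_lt [Fintype VA] {f : VA → ℕ × ℕ} {g : DA → ℕ × ℕ} {N : ℕ}
    (h : ∑ v : VA, decDeg (f v + ∑ e : DA, if att e = v then g e else 0) < N) (e : DA) :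
    g e ≤ (N, N) := by
  apply le_of_decDeg_lt
  calc decDeg (g e)
      ≤ decDeg (f (att e) + ∑ e' : DA, if att e' = att e then g e' else 0) :=
        decDeg_mono ((le_sum_ite_att att g e).trans le_add_self)
    _ ≤ ∑ v : VA, decDeg (f v + ∑ e' : DA, if att e' = v then g e' else 0) :=
        Finset.single_le_sum
          (f := fun v => decDeg (f v + ∑ e' : DA, if att e' = v then g e' else 0))
          (fun _ _ => decDeg_nonneg _) (Finset.mem_univ (att e))
    _ < N := h

end Pushforward

/-- In the extraction–contraction coproduct `Δ⁻` on decorated forests,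
fix a subforest `A` of a decorated tree `(T,𝔫,𝔢)`; let `VA` be its vertex set, `DA` the
set of edges of `T∖A` adjacent to `A` (with attachment map `att : DA → VA`), and let
`edgeDeg` be the (fixed) total degree of the edges of `A` (together with the restricted
edge decoration `𝔢↾E_A`).  The extracted term `(A, 𝔫_A + π𝔢_A, 𝔢↾E_A)` then has degree
`edgeDeg + ∑_v |𝔫_A(v) + (π𝔢_A)(v)|`.  Only finitely many choices of
`(𝔫_A, 𝔢_A)` with `𝔫_A ≤ 𝔫` produce an extracted factor of negative degree; hence after
projecting the left factor to `T₋` the sum defining `Δ⁻` is finite. -/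
theorem stmt18 {VA DA : Type} [Fintype VA] [Fintype DA]
    (edgeDeg : ℝ) (att : DA → VA) (𝔫 : VA → ℕ × ℕ) :
    {p : (VA → ℕ × ℕ) × (DA → ℕ × ℕ) |
      (∀ v, p.1 v ≤ 𝔫 v) ∧
      edgeDeg + ∑ v : VA,
          decDeg (p.1 v + ∑ e : DA, if att e = v then p.2 e else 0) < 0}.Finite := by
  obtain ⟨N, hN⟩ := exists_nat_gt (-edgeDeg)
  refine (Set.finite_Icc (0 : (VA → ℕ × ℕ) × (DA → ℕ × ℕ)) (𝔫, fun _ => (N, N))).subset ?_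
  rintro ⟨f, g⟩ ⟨hf, hdeg⟩
  have hg : ∀ e, g e ≤ (N, N) := le_of_sum_decDeg_lt att (by linarith)
  exact ⟨zero_le, hf, hg⟩
end
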